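/- arXiv:1703.09047 — 7 statements merged into one kernel-verified Lean document; each statement's English description precedes it below -/
import Mathlib

section
/- Let $\mu_i, \nu_i, \xi_i$ ($1 \le i \le 2N$) be complex numbers with $\xi_i$ pairwise distinct, and let $S$ be the $N\times N$ matrix with entries $S_{ij} = (\mu_i \nu_{N+j} - \nu_i \mu_{N+j})/(\xi_i - \xi_{N+j})$. If there exist polynomials $Q_1, Q_2$, not both zero, with $\deg Q_1 \le N-1$ and $\deg Q_2 \le N-1$, such that $\mu_n Q_1(\xi_n) + \nu_n Q_2(\xi_n) = 0$ for all $n = 1,\dots,2N$, then $\det S = 0$. -/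
open Polynomial Finset

lemma lagrange_eval_eq (N : ℕ) (hN : 0 < N) (z : Fin N → ℂ) (hz : Function.Injective z)
    (Q : Polynomial ℂ) (hd : Q.degree < (N : WithBot ℕ)) (x : ℂ) :
    Q.eval x = ∑ j, (Q.eval (z j) / (∏ k ∈ Finset.univ.erase j, (z j - z k))) *
      ∏ k ∈ Finset.univ.erase j, (x - z k) := by
  classical
  set w : Fin N → ℂ := fun j => ∏ k ∈ Finset.univ.erase j, (z j - z k) with hw
  have hwne : ∀ j, w j ≠ 0 := by
    intro j
    refine Finset.prod_ne_zero_iff.2 fun k hk => sub_ne_zero.2 fun h => ?_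
    exact (Finset.mem_erase.1 hk).1 (hz h).symm
  set P : Polynomial ℂ := ∑ j, Polynomial.C (Q.eval (z j) / w j) *
      ∏ k ∈ Finset.univ.erase j, (Polynomial.X - Polynomial.C (z k)) with hP
  have hdegP : P.degree < (N : WithBot ℕ) := by
    refine lt_of_le_of_lt (Polynomial.degree_sum_le _ _) ?_
    refine Finset.sup_lt_iff (by exact_mod_cast (WithBot.bot_lt_coe N)) |>.2 ?_
    intro j _
    refine lt_of_le_of_lt (Polynomial.degree_mul_le _ _) ?_
    have h1 : (Polynomial.C (Q.eval (z j) / w j)).degree ≤ 0 := Polynomial.degree_C_le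
    have h2 : (∏ k ∈ Finset.univ.erase j, (Polynomial.X - Polynomial.C (z k))).degree
        = ((N - 1 : ℕ) : WithBot ℕ) := by
      rw [Polynomial.degree_prod]
      simp [Polynomial.degree_X_sub_C, Finset.card_erase_of_mem]
    have hN1 : 0 < N := j.pos
    calc (Polynomial.C (Q.eval (z j) / w j)).degree +
        (∏ k ∈ Finset.univ.erase j, (Polynomial.X - Polynomial.C (z k))).degree
        ≤ 0 + ((N - 1 : ℕ) : WithBot ℕ) := add_le_add h1 (le_of_eq h2)
      _ = ((N - 1 : ℕ) : WithBot ℕ) := by rw [zero_add]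
      _ < (N : WithBot ℕ) := by exact_mod_cast Nat.sub_lt hN1 one_pos
  have hR : Q - P = 0 := by
    refine Polynomial.eq_zero_of_natDegree_lt_card_of_eval_eq_zero _ hz ?_ ?_
    · intro m
      have hPev : P.eval (z m) = Q.eval (z m) := by
        rw [hP]
        rw [Polynomial.eval_finset_sum]
        rw [Finset.sum_eq_single m]
        · simp only [Polynomial.eval_mul, Polynomial.eval_C, Polynomial.eval_prod,
            Polynomial.eval_sub, Polynomial.eval_X]
          rw [div_mul_cancel₀]
          exact hwne m
        · intro j _ hjm
          have hmem : m ∈ Finset.univ.erase j := Finset.mem_erase.2 ⟨fun h => hjm h.symm, Finset.mem_univ m⟩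
          simp only [Polynomial.eval_mul, Polynomial.eval_C, Polynomial.eval_prod,
            Polynomial.eval_sub, Polynomial.eval_X]
          rw [Finset.prod_eq_zero hmem (by ring), mul_zero]
        · intro h; exact absurd (Finset.mem_univ m) h
      simp [hPev]
    · rw [Fintype.card_fin]
      rcases eq_or_ne (Q - P) 0 with h | h
      · simpa [h] using hN
      · have hlt : (Q - P).degree < (N : WithBot ℕ) :=
          lt_of_le_of_lt (Polynomial.degree_sub_le _ _) (max_lt hd hdegP)
        exact (Polynomial.natDegree_lt_iff_degree_lt h).2 (by simpa using hlt)
  have hQP : Q = P := sub_eq_zero.1 hR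
  conv_lhs => rw [hQP, hP]
  rw [Polynomial.eval_finset_sum]
  simp [Polynomial.eval_prod]
  rfl

lemma partial_fraction (N : ℕ) (hN : 0 < N) (z : Fin N → ℂ) (hz : Function.Injective z)
    (Q : Polynomial ℂ) (hd : Q.degree < (N : WithBot ℕ)) (x : ℂ) (hx : ∀ k, x ≠ z k) :
    ∑ j, Q.eval (z j) / ((∏ k ∈ Finset.univ.erase j, (z j - z k)) * (x - z j)) =
      Q.eval x / ∏ k, (x - z k) := by
  have hxz : ∀ k, x - z k ≠ 0 := fun k => sub_ne_zero.2 (hx k)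
  have hprod : ∀ j : Fin N, (∏ k, (x - z k)) = (x - z j) * ∏ k ∈ Finset.univ.erase j, (x - z k) :=
    fun j => (Finset.mul_prod_erase _ _ (Finset.mem_univ j)).symm
  have hprodne : (∏ k, (x - z k)) ≠ 0 := Finset.prod_ne_zero_iff.2 fun k _ => hxz k
  have hwne : ∀ j : Fin N, (∏ k ∈ Finset.univ.erase j, (z j - z k)) ≠ 0 := by
    intro j
    refine Finset.prod_ne_zero_iff.2 fun k hk => sub_ne_zero.2 fun h => ?_
    exact (Finset.mem_erase.1 hk).1 (hz h).symm
  have herne : ∀ j : Fin N, (∏ k ∈ Finset.univ.erase j, (x - z k)) ≠ 0 :=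
    fun j => Finset.prod_ne_zero_iff.2 fun k _ => hxz k
  rw [lagrange_eval_eq N hN z hz Q hd x, Finset.sum_div]
  refine Finset.sum_congr rfl fun j _ => ?_
  rw [hprod j, div_eq_div_iff (mul_ne_zero (hwne j) (hxz j)) (mul_ne_zero (hxz j) (herne j)),
    div_mul_eq_mul_div, div_mul_eq_mul_div, eq_div_iff (hwne j)]
  ring


/-- Index of `ξ_i` (first half) inside `Fin (2*N)`. -/
def idxA (N : ℕ) (i : Fin N) : Fin (2 * N) := ⟨i.1, by have := i.2; omega⟩

/-- Index of `ξ_{N+j}` (second half) inside `Fin (2*N)`. -/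
def idxB (N : ℕ) (j : Fin N) : Fin (2 * N) := ⟨N + j.1, by have := j.2; omega⟩

/-- Theorem 2.1 (sufficiency): if there are polynomials `Q₁, Q₂`, not both zero, of
degree at most `N-1`, interpolating `μ_n Q₁(ξ_n) + ν_n Q₂(ξ_n) = 0` for all `n`, then
the paired Cauchy matrix `S` is singular. -/
theorem pairedCauchy_singular_of_interp (N : ℕ) (hN : 1 ≤ N)
    (μ ν ξ : Fin (2 * N) → ℂ) (hξ : Function.Injective ξ)
    (hμν : ∀ i, ¬(μ i = 0 ∧ ν i = 0))
    (S : Matrix (Fin N) (Fin N) ℂ)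
    (hS : ∀ i j, S i j =
      (μ (idxA N i) * ν (idxB N j) - ν (idxA N i) * μ (idxB N j)) /
        (ξ (idxA N i) - ξ (idxB N j)))
    (Q₁ Q₂ : Polynomial ℂ) (hQ : ¬(Q₁ = 0 ∧ Q₂ = 0))
    (hd₁ : Q₁.degree ≤ (N - 1 : ℕ)) (hd₂ : Q₂.degree ≤ (N - 1 : ℕ))
    (hinterp : ∀ n : Fin (2 * N), μ n * Q₁.eval (ξ n) + ν n * Q₂.eval (ξ n) = 0) :
    S.det = 0 := by
  classical
  set z : Fin N → ℂ := fun j => ξ (idxB N j) with hz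
  set x : Fin N → ℂ := fun i => ξ (idxA N i) with hxdef
  have hzinj : Function.Injective z := by
    intro a b h
    have := hξ h
    simp only [idxB, Fin.mk.injEq] at this
    exact Fin.ext (by omega)
  have hxz : ∀ i k, x i ≠ z k := by
    intro i k h
    have := hξ h
    simp only [idxA, idxB, Fin.mk.injEq] at this
    omega
  set w : Fin N → ℂ := fun j => ∏ k ∈ Finset.univ.erase j, (z j - z k) with hw
  have hwne : ∀ j, w j ≠ 0 := by
    intro j
    refine Finset.prod_ne_zero_iff.2 fun k hk => sub_ne_zero.2 fun h => ?_
    exact (Finset.mem_erase.1 hk).1 (hzinj h).symm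
  -- the candidate kernel vector
  set c : Fin N → ℂ := fun j =>
    if ν (idxB N j) = 0 then -Q₂.eval (z j) / (μ (idxB N j) * w j)
    else Q₁.eval (z j) / (ν (idxB N j) * w j) with hc
  have hint : ∀ j : Fin N, μ (idxB N j) * Q₁.eval (z j) + ν (idxB N j) * Q₂.eval (z j) = 0 :=
    fun j => hinterp (idxB N j)
  have hA : ∀ j, ν (idxB N j) * c j * w j = Q₁.eval (z j) := by
    intro j
    by_cases hν : ν (idxB N j) = 0
    · have hμ : μ (idxB N j) ≠ 0 := fun h => hμν _ ⟨h, hν⟩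
      have h1 : Q₁.eval (z j) = 0 := by
        have h := hint j
        rw [hν] at h
        simp only [zero_mul, add_zero, mul_eq_zero] at h
        exact h.resolve_left hμ
      simp [hν, h1]
    · simp only [hc, if_neg hν]
      rw [mul_div_assoc', div_mul_eq_mul_div, div_eq_iff (mul_ne_zero hν (hwne j))]
      ring
  have hB : ∀ j, μ (idxB N j) * c j * w j = -Q₂.eval (z j) := by
    intro j
    by_cases hν : ν (idxB N j) = 0
    · have hμ : μ (idxB N j) ≠ 0 := fun h => hμν _ ⟨h, hν⟩
      simp only [hc, if_pos hν]
      rw [mul_div_assoc', div_mul_eq_mul_div, div_eq_iff (mul_ne_zero hμ (hwne j))]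
      ring
    · simp only [hc, if_neg hν]
      rw [mul_div_assoc', div_mul_eq_mul_div, div_eq_iff (mul_ne_zero hν (hwne j))]
      linear_combination w j * hint j
  -- degrees
  have hdeg : ∀ Q : Polynomial ℂ, Q.degree ≤ ((N - 1 : ℕ) : WithBot ℕ) →
      Q.degree < (N : WithBot ℕ) := by
    intro Q h
    exact lt_of_le_of_lt h (by exact_mod_cast Nat.sub_lt hN one_pos)
  -- c ≠ 0
  have hcne : c ≠ 0 := by
    intro h0
    have hc0 : ∀ j, c j = 0 := fun j => congrFun h0 j
    have h1 : ∀ j, Q₁.eval (z j) = 0 := by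
      intro j; rw [← hA j, hc0 j]; ring
    have h2 : ∀ j, Q₂.eval (z j) = 0 := by
      intro j
      have h := hB j
      rw [hc0 j] at h
      simp only [mul_zero, zero_mul] at h
      exact neg_eq_zero.1 h.symm
    have hn1 : Q₁.natDegree < N := by
      rcases eq_or_ne Q₁ 0 with h | h
      · rw [h, Polynomial.natDegree_zero]; omega
      · exact (Polynomial.natDegree_lt_iff_degree_lt h).2 (by simpa using hdeg Q₁ hd₁)
    have hn2 : Q₂.natDegree < N := by
      rcases eq_or_ne Q₂ 0 with h | h
      · rw [h, Polynomial.natDegree_zero]; omega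
      · exact (Polynomial.natDegree_lt_iff_degree_lt h).2 (by simpa using hdeg Q₂ hd₂)
    exact hQ ⟨Polynomial.eq_zero_of_natDegree_lt_card_of_eval_eq_zero Q₁ hzinj h1
        (by simpa using hn1),
      Polynomial.eq_zero_of_natDegree_lt_card_of_eval_eq_zero Q₂ hzinj h2
        (by simpa using hn2)⟩
  -- S.mulVec c = 0
  have hmv : S.mulVec c = 0 := by
    funext i
    have hxzi : ∀ k, x i - z k ≠ 0 := fun k => sub_ne_zero.2 (hxz i k)
    have key : ∀ j, S i j * c j =
        μ (idxA N i) * (Q₁.eval (z j) / (w j * (x i - z j))) +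
        ν (idxA N i) * (Q₂.eval (z j) / (w j * (x i - z j))) := by
      intro j
      rw [hS i j]
      have hk : (μ (idxA N i) * ν (idxB N j) - ν (idxA N i) * μ (idxB N j)) * (c j * w j) =
          μ (idxA N i) * Q₁.eval (z j) + ν (idxA N i) * Q₂.eval (z j) := by
        linear_combination μ (idxA N i) * hA j - ν (idxA N i) * hB j
      have hden : ξ (idxA N i) - ξ (idxB N j) = x i - z j := rfl
      rw [hden]
      rw [div_mul_eq_mul_div, mul_div_assoc', mul_div_assoc', ← add_div,
        div_eq_div_iff (hxzi j) (mul_ne_zero (hwne j) (hxzi j))]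
      linear_combination (x i - z j) * hk
    simp only [Matrix.mulVec, dotProduct, Pi.zero_apply]
    calc ∑ j, S i j * c j
        = ∑ j, (μ (idxA N i) * (Q₁.eval (z j) / (w j * (x i - z j))) +
            ν (idxA N i) * (Q₂.eval (z j) / (w j * (x i - z j)))) :=
          Finset.sum_congr rfl fun j _ => key j
      _ = μ (idxA N i) * ∑ j, Q₁.eval (z j) / (w j * (x i - z j)) +
          ν (idxA N i) * ∑ j, Q₂.eval (z j) / (w j * (x i - z j)) := by
          rw [Finset.sum_add_distrib, Finset.mul_sum, Finset.mul_sum]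
      _ = μ (idxA N i) * (Q₁.eval (x i) / ∏ k, (x i - z k)) +
          ν (idxA N i) * (Q₂.eval (x i) / ∏ k, (x i - z k)) := by
          rw [partial_fraction N hN z hzinj Q₁ (hdeg Q₁ hd₁) (x i) (hxz i),
            partial_fraction N hN z hzinj Q₂ (hdeg Q₂ hd₂) (x i) (hxz i)]
      _ = (μ (idxA N i) * Q₁.eval (x i) + ν (idxA N i) * Q₂.eval (x i)) / ∏ k, (x i - z k) := by
          ring
      _ = 0 := by rw [hinterp (idxA N i)]; simp
  exact (Matrix.exists_mulVec_eq_zero_iff).1 ⟨c, hcne, hmv⟩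
end

section
/- Let $D_{11}, D_{12}, D_{21}, D_{22}$ be polynomials over $\mathbb{C}$ and let $\xi_1,\dots,\xi_{2N}$ be pairwise distinct, $\mu_k, \nu_k$ complex numbers not simultaneously zero for each $k$, such that $\nu_k D_{i1}(\xi_k) + \mu_k D_{i2}(\xi_k) = 0$ for $i = 1,2$ and all $k = 1,\dots,2N$. If $D_{11}$ and $D_{22}$ are monic of degree $N$ and $\deg D_{12} \le N-1$, $\deg D_{21} \le N-1$, then $D_{11}(\lambda) D_{22}(\lambda) - D_{12}(\lambda) D_{21}(\lambda) = \prod_{k=1}^{2N}(\lambda - \xi_k)$. -/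
open Polynomial

/-- Property 2.3: for a basis solution of the interpolation problem,
`D₁₁ D₂₂ - D₁₂ D₂₁ = ∏ (λ - ξ_k)`. -/
theorem basisSolution_det_eq_prod (N : ℕ) (hN : 1 ≤ N)
    (ξ : Fin (2 * N) → ℂ) (hξ : Function.Injective ξ)
    (μ ν : Fin (2 * N) → ℂ) (hμν : ∀ k, ¬(μ k = 0 ∧ ν k = 0))
    (D₁₁ D₁₂ D₂₁ D₂₂ : Polynomial ℂ)
    (h11 : D₁₁.Monic) (h11d : D₁₁.natDegree = N)
    (h22 : D₂₂.Monic) (h22d : D₂₂.natDegree = N)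
    (h12d : D₁₂.degree ≤ (N - 1 : ℕ)) (h21d : D₂₁.degree ≤ (N - 1 : ℕ))
    (hinterp₁ : ∀ k, ν k * D₁₁.eval (ξ k) + μ k * D₁₂.eval (ξ k) = 0)
    (hinterp₂ : ∀ k, ν k * D₂₁.eval (ξ k) + μ k * D₂₂.eval (ξ k) = 0) :
    D₁₁ * D₂₂ - D₁₂ * D₂₁ = ∏ k : Fin (2 * N), (X - C (ξ k)) := by
  set P : Polynomial ℂ := D₁₁ * D₂₂ - D₁₂ * D₂₁ with hP
  set Q : Polynomial ℂ := ∏ k : Fin (2 * N), (X - C (ξ k)) with hQ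
  -- every ξ k is a root of P
  have hroot : ∀ k, P.eval (ξ k) = 0 := by
    intro k
    have h1 := hinterp₁ k
    have h2 := hinterp₂ k
    have hev : P.eval (ξ k) =
        D₁₁.eval (ξ k) * D₂₂.eval (ξ k) - D₁₂.eval (ξ k) * D₂₁.eval (ξ k) := by
      simp [hP]
    rcases eq_or_ne (μ k) 0 with hm | hm
    · have hn : ν k ≠ 0 := fun h => hμν k ⟨hm, h⟩
      have key : ν k * (D₁₁.eval (ξ k) * D₂₂.eval (ξ k)
          - D₁₂.eval (ξ k) * D₂₁.eval (ξ k)) = 0 := by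
        linear_combination D₂₂.eval (ξ k) * h1 - D₁₂.eval (ξ k) * h2
      rw [hev]
      exact (mul_eq_zero.1 key).resolve_left hn
    · have key : μ k * (D₁₁.eval (ξ k) * D₂₂.eval (ξ k)
          - D₁₂.eval (ξ k) * D₂₁.eval (ξ k)) = 0 := by
        linear_combination D₁₁.eval (ξ k) * h2 - D₂₁.eval (ξ k) * h1
      rw [hev]
      exact (mul_eq_zero.1 key).resolve_left hm
  -- Q divides P
  have hdvd : Q ∣ P := by
    rw [hQ]
    apply Finset.prod_dvd_of_coprime
    · intro i _ j _ hij
      exact Polynomial.isCoprime_X_sub_C_of_isUnit_sub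
        ((sub_ne_zero.2 fun h => hij (hξ h)).isUnit)
    · intro i _
      exact dvd_iff_isRoot.2 (hroot i)
  -- degree facts
  have hQm : Q.Monic := monic_prod_of_monic _ _ fun k _ => monic_X_sub_C _
  have hQd : Q.natDegree = 2 * N := by
    rw [hQ, natDegree_prod_of_monic _ _ fun k _ => monic_X_sub_C _]
    simp [natDegree_X_sub_C]
  have hmulm : (D₁₁ * D₂₂).Monic := h11.mul h22
  have hmuld : (D₁₁ * D₂₂).degree = ((2 * N : ℕ) : WithBot ℕ) := by
    rw [degree_eq_natDegree hmulm.ne_zero, h11.natDegree_mul h22, h11d, h22d]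
    norm_num
    ring
  have hdeglt : (D₁₂ * D₂₁).degree < (D₁₁ * D₂₂).degree := by
    calc (D₁₂ * D₂₁).degree ≤ D₁₂.degree + D₂₁.degree := degree_mul_le _ _
      _ ≤ ((N - 1 : ℕ) : WithBot ℕ) + ((N - 1 : ℕ) : WithBot ℕ) := add_le_add h12d h21d
      _ = ((N - 1 + (N - 1) : ℕ) : WithBot ℕ) := by norm_cast
      _ < ((2 * N : ℕ) : WithBot ℕ) := by
          rw [Nat.cast_lt]
          omega
      _ = (D₁₁ * D₂₂).degree := hmuld.symm
  have hPm : P.Monic := by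
    rw [hP, sub_eq_add_neg]
    exact hmulm.add_of_left (by rwa [degree_neg])
  have hPdeg : P.degree = ((2 * N : ℕ) : WithBot ℕ) := by
    rw [hP, degree_sub_eq_left_of_degree_lt hdeglt, hmuld]
  have hPd : P.natDegree = 2 * N := natDegree_eq_of_degree_eq_some hPdeg
  -- conclude P = Q
  obtain ⟨c, hc⟩ := hdvd
  have hc0 : c ≠ 0 := by
    rintro rfl
    rw [mul_zero] at hc
    exact hPm.ne_zero hc
  have hcd : c.natDegree = 0 := by
    have := natDegree_mul hQm.ne_zero hc0
    rw [← hc, hPd, hQd] at this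
    omega
  have hclc : c.leadingCoeff = 1 := by
    have := leadingCoeff_mul Q c
    rw [← hc, hPm.leadingCoeff, hQm.leadingCoeff, one_mul] at this
    exact this.symm
  have : c = 1 := by
    rw [eq_C_of_natDegree_eq_zero hcd]
    rw [leadingCoeff, hcd] at hclc
    rw [hclc, map_one]
  rw [hc, this, mul_one]
end

section
/- Let $\omega, \alpha_0 > 0$ with $\omega \ne \alpha_0$, and set $\chi(x,t) = \omega x + t/\omega - \tfrac12 \ln|(\omega-\alpha_0)/(\omega+\alpha_0)|$. Then the function $\phi(x,t) = 2\ln|\tanh(\chi(x,t))|$ satisfies the sinh-Gordon equation $\partial^2\phi/\partial x\,\partial t = 4\sinh\phi$ at every point where $\tanh(\chi(x,t)) \ne 0$. -/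
lemma tanh_ne_zero_iff {x : ℝ} : Real.tanh x ≠ 0 ↔ x ≠ 0 := by
  rw [Real.tanh_eq_sinh_div_cosh, div_ne_zero_iff]
  constructor
  · intro h; exact Real.sinh_ne_zero.mp h.1
  · intro h; exact ⟨Real.sinh_ne_zero.mpr h, (Real.cosh_pos x).ne'⟩

lemma log_abs_tanh (u : ℝ) (hu : u ≠ 0) :
    Real.log |Real.tanh u| = Real.log (Real.sinh u) - Real.log (Real.cosh u) := by
  rw [Real.log_abs, Real.tanh_eq_sinh_div_cosh,
    Real.log_div (Real.sinh_ne_zero.mpr hu) (Real.cosh_pos u).ne']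

/-- derivative of `x ↦ 2 log|tanh(c x + b)|`. -/
lemma hasDerivAt_phi (c b x : ℝ) (h : c * x + b ≠ 0) :
    HasDerivAt (fun x' : ℝ => 2 * Real.log |Real.tanh (c * x' + b)|)
      (2 * c / (Real.sinh (c * x + b) * Real.cosh (c * x + b))) x := by
  have hu : HasDerivAt (fun x' : ℝ => c * x' + b) c x := by
    simpa using ((hasDerivAt_id x).const_mul c).add_const b
  set u := c * x + b with hudef
  have hs : Real.sinh u ≠ 0 := Real.sinh_ne_zero.mpr h
  have hc : Real.cosh u ≠ 0 := (Real.cosh_pos u).ne'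
  have h1 : HasDerivAt (fun x' : ℝ => Real.log (Real.sinh (c * x' + b)))
      ((Real.sinh u)⁻¹ * (Real.cosh u * c)) x :=
    by have := (Real.hasDerivAt_log hs).comp x ((Real.hasDerivAt_sinh u).comp x hu); exact this
  have h2 : HasDerivAt (fun x' : ℝ => Real.log (Real.cosh (c * x' + b)))
      ((Real.cosh u)⁻¹ * (Real.sinh u * c)) x :=
    by have := (Real.hasDerivAt_log hc).comp x ((Real.hasDerivAt_cosh u).comp x hu); exact this
  have h3 := (h1.sub h2).const_mul 2
  have hev : ∀ᶠ x' in nhds x, c * x' + b ≠ 0 :=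
    (((continuous_const.mul continuous_id).add continuous_const).continuousAt).eventually_ne h
  have heq : (fun x' : ℝ => 2 * Real.log |Real.tanh (c * x' + b)|) =ᶠ[nhds x]
      (fun y => 2 * (Real.log (Real.sinh (c * y + b)) - Real.log (Real.cosh (c * y + b)))) :=
    hev.mono fun x' hx' => by simp only [log_abs_tanh _ hx']
  have h4 := h3.congr_of_eventuallyEq heq
  refine h4.congr_deriv (Eq.symm ?_)
  have hid : Real.cosh u ^ 2 - Real.sinh u ^ 2 = 1 := Real.cosh_sq_sub_sinh_sq u
  field_simp
  linear_combination (-c) * hid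


/-- Example 3.1: the function `φ(x,t) = 2 ln|tanh(χ(x,t))|` with
`χ(x,t) = ω x + t/ω - ½ ln|(ω-α₀)/(ω+α₀)|` satisfies the sinh-Gordon equation
`∂²φ/∂x∂t = 4 sinh φ` wherever `tanh χ ≠ 0`. -/
theorem shg_one_soliton (ω α₀ : ℝ) (hω : 0 < ω) (hα : 0 < α₀) (hne : ω ≠ α₀)
    (χ φ : ℝ → ℝ → ℝ)
    (hχ : ∀ x t, χ x t = ω * x + t / ω - (1 / 2) * Real.log |(ω - α₀) / (ω + α₀)|)
    (hφ : ∀ x t, φ x t = 2 * Real.log |Real.tanh (χ x t)|) :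
    ∀ x t, Real.tanh (χ x t) ≠ 0 →
      deriv (fun t' => deriv (fun x' => φ x' t') x) t = 4 * Real.sinh (φ x t) := by
  intro x t ht
  set K := (1 / 2) * Real.log |(ω - α₀) / (ω + α₀)| with hK
  have hχ' : ∀ x' t', χ x' t' = ω * x' + (t' / ω - K) := by
    intro x' t'; rw [hχ]; ring
  have hωne : ω ≠ 0 := hω.ne'
  -- inner derivative formula
  have hinner : ∀ t', χ x t' ≠ 0 →
      deriv (fun x' => φ x' t') x
        = 2 * ω / (Real.sinh (χ x t') * Real.cosh (χ x t')) := by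
    intro t' h0
    have h0' : ω * x + (t' / ω - K) ≠ 0 := by rw [← hχ' x t']; exact h0
    have hd := (hasDerivAt_phi ω (t' / ω - K) x h0').deriv
    have hfe : (fun x' => φ x' t')
        = fun x' => 2 * Real.log |Real.tanh (ω * x' + (t' / ω - K))| := by
      funext x'; rw [hφ, hχ' x' t']
    rw [hfe, hd, hχ' x t']
  have hχt : χ x t ≠ 0 := by
    intro h0; exact ht (by rw [h0, Real.tanh_zero])
  -- χ x · is continuous, so eventually nonzero near t
  have hcont : Continuous (fun t' => χ x t') := by
    have : (fun t' => χ x t') = fun t' => ω * x + (t' / ω - K) := by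
      funext t'; exact hχ' x t'
    rw [this]; fun_prop
  have hev : ∀ᶠ t' in nhds t, χ x t' ≠ 0 := hcont.continuousAt.eventually_ne hχt
  have heq : (fun t' => deriv (fun x' => φ x' t') x) =ᶠ[nhds t]
      (fun t' => 2 * ω / (Real.sinh (χ x t') * Real.cosh (χ x t'))) :=
    hev.mono fun t' h0 => hinner t' h0
  rw [heq.deriv_eq]
  -- compute derivative of the explicit formula
  set u := χ x t with hu
  have hs : Real.sinh u ≠ 0 := Real.sinh_ne_zero.mpr hχt
  have hc : Real.cosh u ≠ 0 := (Real.cosh_pos u).ne'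
  have hv : HasDerivAt (fun t' => χ x t') (1 / ω) t := by
    have : HasDerivAt (fun t' : ℝ => ω * x + (t' / ω - K)) (1 / ω) t := by
      simpa using (((hasDerivAt_id t).div_const ω).sub_const K).const_add (ω * x)
    exact this.congr_of_eventuallyEq (Filter.Eventually.of_forall fun t' => hχ' x t')
  have hprod : HasDerivAt (fun t' => Real.sinh (χ x t') * Real.cosh (χ x t'))
      ((Real.cosh u * (1 / ω)) * Real.cosh u + Real.sinh u * (Real.sinh u * (1 / ω))) t :=
    ((Real.hasDerivAt_sinh u).comp t hv).mul ((Real.hasDerivAt_cosh u).comp t hv)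
  have hprodne : Real.sinh u * Real.cosh u ≠ 0 := mul_ne_zero hs hc
  have hDer := ((hprod.inv hprodne).const_mul (2 * ω)).deriv
  have hfun : (fun t' => 2 * ω / (Real.sinh (χ x t') * Real.cosh (χ x t')))
      = fun t' => 2 * ω * (Real.sinh (χ x t') * Real.cosh (χ x t'))⁻¹ := by
    funext t'; rw [div_eq_mul_inv]
  rw [hfun, show (fun t' => 2 * ω * (Real.sinh (χ x t') * Real.cosh (χ x t'))⁻¹) = (fun y => 2 * ω * (fun t' => Real.sinh (χ x t') * Real.cosh (χ x t'))⁻¹ y) from rfl, hDer]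
  -- compute RHS
  have hT : Real.tanh u ≠ 0 := ht
  have hexp : Real.exp (2 * Real.log |Real.tanh u|) = Real.tanh u ^ 2 := by
    rw [two_mul, Real.exp_add, Real.exp_log (abs_pos.mpr hT), ← sq, sq_abs]
  have hsinh : Real.sinh (φ x t) = (Real.tanh u ^ 2 - (Real.tanh u ^ 2)⁻¹) / 2 := by
    rw [hφ, Real.sinh_eq, ← hu, Real.exp_neg, hexp]
  rw [hsinh, Real.tanh_eq_sinh_div_cosh]
  have hid : Real.cosh u ^ 2 - Real.sinh u ^ 2 = 1 := Real.cosh_sq_sub_sinh_sq u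
  rw [← hu]
  field_simp
  linear_combination (4 *
    (Real.cosh u ^ 2 + Real.sinh u ^ 2)) * hid
end

section
/- Let $\omega > 0$ and $c \in \mathbb{R}$, and set $\chi(x,t) = 2(\omega x - \omega^3 t - c)$. Then the function $\psi(x,t) = 2\omega / \sinh(\chi(x,t))$ satisfies the modified Korteweg–de Vries equation $\partial_t \psi = -\tfrac14 \partial_x^3 \psi + \tfrac32 |\psi|^2 \partial_x \psi$ at every point where $\sinh(\chi(x,t)) \ne 0$. -/
open Real

private lemma inner_hasDerivAt (ω b y : ℝ) :
    HasDerivAt (fun z : ℝ => 2 * (ω * z - b)) (2 * ω) y := by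
  simpa using (((hasDerivAt_id y).const_mul ω).sub_const b).const_mul 2

private lemma S_hasDerivAt (ω b y : ℝ) :
    HasDerivAt (fun z : ℝ => Real.sinh (2 * (ω * z - b)))
      (Real.cosh (2 * (ω * y - b)) * (2 * ω)) y :=
  (Real.hasDerivAt_sinh _).comp y (inner_hasDerivAt ω b y)

private lemma C_hasDerivAt (ω b y : ℝ) :
    HasDerivAt (fun z : ℝ => Real.cosh (2 * (ω * z - b)))
      (Real.sinh (2 * (ω * y - b)) * (2 * ω)) y :=
  (Real.hasDerivAt_cosh _).comp y (inner_hasDerivAt ω b y)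

private lemma d1 (ω b : ℝ) {y : ℝ} (hy : Real.sinh (2 * (ω * y - b)) ≠ 0) :
    HasDerivAt (fun z : ℝ => 2 * ω / Real.sinh (2 * (ω * z - b)))
      (-(4 * ω ^ 2) * Real.cosh (2 * (ω * y - b)) / Real.sinh (2 * (ω * y - b)) ^ 2) y := by
  have h := (hasDerivAt_const y (2 * ω)).fun_div (S_hasDerivAt ω b y) hy
  refine h.congr_deriv ?_
  symm
  field_simp
  ring

private lemma d2 (ω b : ℝ) {y : ℝ} (hy : Real.sinh (2 * (ω * y - b)) ≠ 0) :
    HasDerivAt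
      (fun z : ℝ => -(4 * ω ^ 2) * Real.cosh (2 * (ω * z - b)) /
        Real.sinh (2 * (ω * z - b)) ^ 2)
      (8 * ω ^ 3 / Real.sinh (2 * (ω * y - b)) +
        16 * ω ^ 3 / Real.sinh (2 * (ω * y - b)) ^ 3) y := by
  have hnum := (C_hasDerivAt ω b y).const_mul (-(4 * ω ^ 2))
  have hden := (S_hasDerivAt ω b y).fun_pow 2
  have h := hnum.fun_div hden (pow_ne_zero 2 hy)
  refine h.congr_deriv ?_
  symm
  have hc : Real.cosh (2 * (ω * y - b)) ^ 2 = Real.sinh (2 * (ω * y - b)) ^ 2 + 1 :=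
    Real.cosh_sq _
  field_simp
  linear_combination (-16 * ω ^ 3 * Real.sinh (2 * (ω * y - b))) * hc

private lemma d3 (ω b : ℝ) {y : ℝ} (hy : Real.sinh (2 * (ω * y - b)) ≠ 0) :
    HasDerivAt
      (fun z : ℝ => 8 * ω ^ 3 / Real.sinh (2 * (ω * z - b)) +
        16 * ω ^ 3 / Real.sinh (2 * (ω * z - b)) ^ 3)
      (-(16 * ω ^ 4) * Real.cosh (2 * (ω * y - b)) / Real.sinh (2 * (ω * y - b)) ^ 2 -
        96 * ω ^ 4 * Real.cosh (2 * (ω * y - b)) / Real.sinh (2 * (ω * y - b)) ^ 4) y := by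
  have h1 := (hasDerivAt_const y (8 * ω ^ 3)).fun_div (S_hasDerivAt ω b y) hy
  have h2 := (hasDerivAt_const y (16 * ω ^ 3)).fun_div ((S_hasDerivAt ω b y).fun_pow 3)
    (pow_ne_zero 3 hy)
  have h := h1.add h2
  refine h.congr_deriv ?_
  symm
  norm_num
  field_simp
  ring

/-- Example 3.2 (real case): the function `ψ(x,t) = 2ω / sinh(2(ωx - ω³t - c))`
satisfies the modified Korteweg–de Vries equation
`∂ₜψ = -¼ ∂ₓ³ψ + (3/2)|ψ|² ∂ₓψ` wherever `sinh ≠ 0`. -/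
theorem mkdv_one_singular_wave (ω c : ℝ) (hω : 0 < ω)
    (ψ : ℝ → ℝ → ℝ)
    (hψ : ∀ x t, ψ x t = 2 * ω / Real.sinh (2 * (ω * x - ω ^ 3 * t - c))) :
    ∀ x t, Real.sinh (2 * (ω * x - ω ^ 3 * t - c)) ≠ 0 →
      deriv (fun t' => ψ x t') t =
        -(1 / 4) * iteratedDeriv 3 (fun x' => ψ x' t) x +
          (3 / 2) * |ψ x t| ^ 2 * deriv (fun x' => ψ x' t) x := by
  intro x t hs0
  set b : ℝ := ω ^ 3 * t + c with hb
  have hsx : Real.sinh (2 * (ω * x - b)) ≠ 0 := by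
    rwa [hb, ← sub_sub]
  -- the spatial slice
  have hF : (fun x' => ψ x' t) = fun z => 2 * ω / Real.sinh (2 * (ω * z - b)) := by
    funext z
    rw [hψ, hb, ← sub_sub]
  -- continuity of S
  have hScont : Continuous (fun z : ℝ => Real.sinh (2 * (ω * z - b))) := by
    continuity
  -- pointwise: wherever S ≠ 0, first derivative is g₁
  have hderiv1 : ∀ y : ℝ, Real.sinh (2 * (ω * y - b)) ≠ 0 →
      deriv (fun x' => ψ x' t) y =
        -(4 * ω ^ 2) * Real.cosh (2 * (ω * y - b)) / Real.sinh (2 * (ω * y - b)) ^ 2 := by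
    intro y hy
    rw [hF]
    exact (d1 ω b hy).deriv
  have hderiv2 : ∀ y : ℝ, Real.sinh (2 * (ω * y - b)) ≠ 0 →
      deriv (deriv (fun x' => ψ x' t)) y =
        8 * ω ^ 3 / Real.sinh (2 * (ω * y - b)) +
          16 * ω ^ 3 / Real.sinh (2 * (ω * y - b)) ^ 3 := by
    intro y hy
    have hev : deriv (fun x' => ψ x' t) =ᶠ[nhds y]
        (fun z => -(4 * ω ^ 2) * Real.cosh (2 * (ω * z - b)) /
          Real.sinh (2 * (ω * z - b)) ^ 2) := by
      filter_upwards [hScont.continuousAt.eventually_ne hy] with z hz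
      exact hderiv1 z hz
    rw [hev.deriv_eq]
    exact (d2 ω b hy).deriv
  have hderiv3 : deriv (deriv (deriv (fun x' => ψ x' t))) x =
      -(16 * ω ^ 4) * Real.cosh (2 * (ω * x - b)) / Real.sinh (2 * (ω * x - b)) ^ 2 -
        96 * ω ^ 4 * Real.cosh (2 * (ω * x - b)) / Real.sinh (2 * (ω * x - b)) ^ 4 := by
    have hev : deriv (deriv (fun x' => ψ x' t)) =ᶠ[nhds x]
        (fun z => 8 * ω ^ 3 / Real.sinh (2 * (ω * z - b)) +
          16 * ω ^ 3 / Real.sinh (2 * (ω * z - b)) ^ 3) := by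
      filter_upwards [hScont.continuousAt.eventually_ne hsx] with z hz
      exact hderiv2 z hz
    rw [hev.deriv_eq]
    exact (d3 ω b hsx).deriv
  -- time derivative
  have htime : deriv (fun t' => ψ x t') t =
      4 * ω ^ 4 * Real.cosh (2 * (ω * x - b)) / Real.sinh (2 * (ω * x - b)) ^ 2 := by
    have hG : (fun t' => ψ x t') =
        fun s => 2 * ω / Real.sinh (2 * (ω * x - (ω ^ 3 * s + c))) := by
      funext s
      rw [hψ, ← sub_sub]
    have hinner : HasDerivAt (fun s : ℝ => 2 * (ω * x - (ω ^ 3 * s + c)))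
        (-(2 * ω ^ 3)) t := by
      have h1 : HasDerivAt (fun s : ℝ => ω ^ 3 * s + c) (ω ^ 3) t := by
        simpa using ((hasDerivAt_id t).const_mul (ω ^ 3)).add_const c
      have h2 := ((hasDerivAt_const t (ω * x)).sub h1).const_mul 2
      simpa using h2
    have hSin : HasDerivAt (fun s : ℝ => Real.sinh (2 * (ω * x - (ω ^ 3 * s + c))))
        (Real.cosh (2 * (ω * x - (ω ^ 3 * t + c))) * (-(2 * ω ^ 3))) t :=
      (Real.hasDerivAt_sinh _).comp t hinner
    have hsx' : Real.sinh (2 * (ω * x - (ω ^ 3 * t + c))) ≠ 0 := hsx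
    have h := (hasDerivAt_const t (2 * ω)).fun_div hSin hsx'
    rw [hG, h.deriv, hb]
    field_simp
    ring
  -- put it together
  rw [show iteratedDeriv 3 (fun x' => ψ x' t) =
      deriv (deriv (deriv (fun x' => ψ x' t))) by
    simp [iteratedDeriv_succ, iteratedDeriv_zero]]
  rw [htime, hderiv3, hderiv1 x hsx, sq_abs, hψ, hb, ← sub_sub]
  have hs1 : Real.sinh (2 * (ω * (x - ω ^ 2 * t) - c)) ≠ 0 := by
    rw [show ω * (x - ω ^ 2 * t) - c = ω * x - ω ^ 3 * t - c by ring]; exact hs0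
  field_simp
  ring
end

section
/- Let $0 < \omega_1 < \omega_2$. The equation $\left|\frac{\omega_1 + p}{\omega_1 - p}\right|^{\omega_2} = \left|\frac{\omega_2 + p}{\omega_2 - p}\right|^{\omega_1}$ has solution $p = 0$, and on the interval $(\omega_1, \omega_2)$ it has at least one solution $p^* > 0$; moreover $p$ is a solution if and only if $-p$ is. -/
private lemma cont_aux (a c : ℝ) (hc : 0 < c) : Continuous (fun p : ℝ => |a + p| ^ c) := by
  rw [continuous_iff_continuousAt]
  intro x
  exact (Real.continuousAt_rpow_const _ _ (Or.inr hc.le)).comp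
    ((continuous_abs.comp (continuous_const.add continuous_id)).continuousAt)

private lemma cont_aux' (a c : ℝ) (hc : 0 < c) : Continuous (fun p : ℝ => |a - p| ^ c) := by
  rw [continuous_iff_continuousAt]
  intro x
  exact (Real.continuousAt_rpow_const _ _ (Or.inr hc.le)).comp
    ((continuous_abs.comp (continuous_const.sub continuous_id)).continuousAt)

/-- The consistency condition (3.122): `p = 0` is a solution, there is a solution in
`(ω₁, ω₂)`, and the solution set is symmetric under `p ↦ -p`. -/
theorem consistency_condition_solutions (ω₁ ω₂ : ℝ) (h1 : 0 < ω₁) (h12 : ω₁ < ω₂) :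
    (|(ω₁ + (0:ℝ)) / (ω₁ - 0)| ^ ω₂ = |(ω₂ + (0:ℝ)) / (ω₂ - 0)| ^ ω₁) ∧
    (∃ p ∈ Set.Ioo ω₁ ω₂,
      |(ω₁ + p) / (ω₁ - p)| ^ ω₂ = |(ω₂ + p) / (ω₂ - p)| ^ ω₁) ∧
    (∀ p : ℝ,
      |(ω₁ + p) / (ω₁ - p)| ^ ω₂ = |(ω₂ + p) / (ω₂ - p)| ^ ω₁ ↔
      |(ω₁ + -p) / (ω₁ - -p)| ^ ω₂ = |(ω₂ + -p) / (ω₂ - -p)| ^ ω₁) := by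
  have h2 : 0 < ω₂ := h1.trans h12
  refine ⟨?_, ?_, ?_⟩
  · have e1 : (ω₁ + (0:ℝ)) / (ω₁ - 0) = 1 := by rw [add_zero, sub_zero, div_self h1.ne']
    have e2 : (ω₂ + (0:ℝ)) / (ω₂ - 0) = 1 := by rw [add_zero, sub_zero, div_self h2.ne']
    rw [e1, e2]; simp
  · -- existence via IVT on F
    set F : ℝ → ℝ := fun p => |ω₁ + p| ^ ω₂ * |ω₂ - p| ^ ω₁ - |ω₂ + p| ^ ω₁ * |ω₁ - p| ^ ω₂
      with hF
    have hcont : ContinuousOn F (Set.Icc ω₁ ω₂) :=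
      (((cont_aux ω₁ ω₂ h2).mul (cont_aux' ω₂ ω₁ h1)).sub
        ((cont_aux ω₂ ω₁ h1).mul (cont_aux' ω₁ ω₂ h2))).continuousOn
    have hFa : 0 < F ω₁ := by
      have : |ω₁ - ω₁| ^ ω₂ = 0 := by
        simp [Real.zero_rpow h2.ne']
      simp only [hF, this, mul_zero, sub_zero]
      exact mul_pos (Real.rpow_pos_of_pos (abs_pos.2 (by linarith)) _)
        (Real.rpow_pos_of_pos (abs_pos.2 (by linarith)) _)
    have hFb : F ω₂ < 0 := by
      have : |ω₂ - ω₂| ^ ω₁ = 0 := by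
        simp [Real.zero_rpow h1.ne']
      simp only [hF, this, mul_zero, zero_sub, neg_neg, neg_lt_zero]
      exact mul_pos (Real.rpow_pos_of_pos (abs_pos.2 (by linarith)) _)
        (Real.rpow_pos_of_pos (abs_pos.2 (by linarith)) _)
    have h0 : (0:ℝ) ∈ Set.Ioo (F ω₂) (F ω₁) := ⟨hFb, hFa⟩
    obtain ⟨p, hp, hFp⟩ := intermediate_value_Ioo' h12.le hcont h0
    refine ⟨p, hp, ?_⟩
    obtain ⟨hp1, hp2⟩ := hp
    have hd1 : (0:ℝ) < |ω₁ - p| ^ ω₂ :=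
      Real.rpow_pos_of_pos (abs_pos.2 (by linarith)) _
    have hd2 : (0:ℝ) < |ω₂ - p| ^ ω₁ :=
      Real.rpow_pos_of_pos (abs_pos.2 (by linarith)) _
    rw [abs_div, abs_div, Real.div_rpow (abs_nonneg _) (abs_nonneg _),
      Real.div_rpow (abs_nonneg _) (abs_nonneg _), div_eq_div_iff hd1.ne' hd2.ne']
    simpa [hF, sub_eq_zero] using hFp
  · intro p
    have key : ∀ a : ℝ, |(a + -p) / (a - -p)| = |(a + p) / (a - p)|⁻¹ := by
      intro a
      rw [abs_div, abs_div, inv_div, sub_neg_eq_add, ← sub_eq_add_neg]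
    rw [key, key, Real.inv_rpow (abs_nonneg _), Real.inv_rpow (abs_nonneg _), inv_inj]
end

section
/- Let $N \ge 2$, $\omega_1,\dots,\omega_N > 0$ with pairwise distinct squares, and suppose differentiable functions $p_1(t),\dots,p_{N-1}(t)$ with pairwise distinct squares, each $p_i(t)^2 \ne \omega_k^2$, satisfy the linear system $\sum_{i=1}^{N-1} \frac{1}{(\omega_1^2 - p_i^2)(\omega_k^2 - p_i^2)} \frac{dp_i}{dt} = \frac{1}{\omega_k^2 \omega_1^2}$ for $k = 2,\dots,N$. Then for each $k$, $\frac{dp_k}{dt} = (-1)^N \frac{\prod_{i \ne k} p_i^2 \cdot \prod_{i=1}^N (\omega_i^2 - p_k^2)}{\prod_{i=1}^N \omega_i^2 \cdot \prod_{i \ne k}(p_k^2 - p_i^2)}$. -/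
section KeyLemma
open Finset Polynomial
lemma key_lemma (n : ℕ) (x D : Fin n → ℝ) (w : Fin (n+1) → ℝ) (E : ℝ)
    (hx : Function.Injective x) (hw0 : ∀ m, w m ≠ 0) (hxw : ∀ i m, x i ≠ w m)
    (hwinj : Function.Injective w)
    (hsys : ∀ m, ∑ i, D i / (w m - x i) = 1 / w m + E) :
    (E * ∏ m, w m = -∏ j, x j) ∧
    (∀ k, D k * (x k * ∏ j ∈ univ.erase k, (x k - x j)) = -E * ∏ m, (x k - w m)) ∧
    (∀ k, x k = 0 → D k = 1) := by
  classical
  set L : Fin n → ℝ[X] := fun i => ∏ j ∈ univ.erase i, (X - C (x j)) with hL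
  set M : ℝ[X] := ∏ j, (X - C (x j)) with hMdef
  set W : ℝ[X] := ∏ m, (X - C (w m)) with hWdef
  set P : ℝ[X] := (∑ i, C (D i) * (X * L i)) - M - C E * (X * M) with hPdef
  have hMfac : ∀ i, M = (X - C (x i)) * L i := by
    intro i
    rw [hMdef, hL, ← Finset.mul_prod_erase univ _ (Finset.mem_univ i)]
  have hMmonic : M.Monic := monic_prod_of_monic _ _ fun j _ => monic_X_sub_C _
  have hWmonic : W.Monic := monic_prod_of_monic _ _ fun j _ => monic_X_sub_C _
  have hMdeg : M.natDegree = n := by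
    rw [hMdef, natDegree_prod_of_monic _ _ fun j _ => monic_X_sub_C _]
    simp
  have hWdeg : W.natDegree = n + 1 := by
    rw [hWdef, natDegree_prod_of_monic _ _ fun j _ => monic_X_sub_C _]
    simp
  have hLdeg : ∀ i, (L i).natDegree ≤ n - 1 := by
    intro i
    rw [hL]
    calc (∏ j ∈ univ.erase i, (X - C (x j))).natDegree
        = ∑ j ∈ univ.erase i, (X - C (x j)).natDegree :=
          natDegree_prod_of_monic _ _ fun j _ => monic_X_sub_C _
      _ ≤ n - 1 := by simp [Finset.card_erase_of_mem]
  have hPeval' : ∀ z : ℝ, P.eval z =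
      (∑ i, D i * (z * (L i).eval z)) - M.eval z - E * (z * M.eval z) := by
    intro z
    simp [hPdef, eval_finset_sum]
  have hMeval : ∀ z, M.eval z = ∏ j, (z - x j) := by
    intro z; simp [hMdef, eval_prod]
  have hWeval : ∀ z, W.eval z = ∏ m, (z - w m) := by
    intro z; simp [hWdef, eval_prod]
  have hLeval : ∀ i z, (L i).eval z = ∏ j ∈ univ.erase i, (z - x j) := by
    intro i z; simp [hL, eval_prod]
  -- P vanishes at suitable points
  have hPeval : ∀ z : ℝ, (∀ j, z ≠ x j) → z ≠ 0 →
      (∑ i, D i / (z - x i) = 1 / z + E) → P.eval z = 0 := by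
    intro z hzx hz0 heq
    have hterm : ∀ i ∈ (univ : Finset (Fin n)), D i * (z * (L i).eval z)
        = (D i / (z - x i)) * (z * M.eval z) := by
      intro i _
      have h1 : z - x i ≠ 0 := sub_ne_zero.mpr (hzx i)
      rw [hMfac i]
      simp only [eval_mul, eval_sub, eval_X, eval_C]
      field_simp
    rw [hPeval' z, Finset.sum_congr rfl hterm, ← Finset.sum_mul, heq]
    field_simp
    ring
  have hPw : ∀ m, P.eval (w m) = 0 := fun m =>
    hPeval (w m) (fun j h => hxw j m h.symm) (hw0 m) (hsys m)
  -- degree bookkeeping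
  have h1 : (∑ i, C (D i) * (X * L i)).natDegree ≤ n := by
    apply Polynomial.natDegree_sum_le_of_forall_le
    intro i _
    calc (C (D i) * (X * L i)).natDegree ≤ (X * L i).natDegree :=
          natDegree_C_mul_le _ _
      _ ≤ X.natDegree + (L i).natDegree := natDegree_mul_le
      _ ≤ n := by
          have h := hLdeg i
          have h2 := i.2
          simp only [natDegree_X]
          omega
  have hXM : (X * M).Monic := monic_X.mul hMmonic
  have hXMdeg : (X * M).natDegree = n + 1 := by
    rw [natDegree_mul X_ne_zero hMmonic.ne_zero, natDegree_X, hMdeg]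
    omega
  have h2 : (W - X * M).degree < ((n + 1 : ℕ) : WithBot ℕ) := by
    have h := Polynomial.degree_sub_lt
      (show W.degree = (X * M).degree by
        rw [degree_eq_natDegree hWmonic.ne_zero, degree_eq_natDegree hXM.ne_zero,
          hWdeg, hXMdeg])
      hWmonic.ne_zero
      (by rw [hWmonic.leadingCoeff, hXM.leadingCoeff])
    rwa [degree_eq_natDegree hWmonic.ne_zero, hWdeg] at h
  have h2' : (W - X * M).natDegree ≤ n := by
    by_cases hz : W - X * M = 0
    · simp [hz]
    · exact Nat.lt_succ_iff.mp ((natDegree_lt_iff_degree_lt hz).mpr h2)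
  have hG : P + C E * W = 0 := by
    apply Polynomial.eq_zero_of_natDegree_lt_card_of_eval_eq_zero _ hwinj
    · intro m
      have hWm : W.eval (w m) = 0 := by
        rw [hWdef]
        simp only [eval_prod, eval_sub, eval_X, eval_C]
        exact Finset.prod_eq_zero (Finset.mem_univ m) (by ring)
      simp [hPw m, hWm]
    · have hre : P + C E * W = ((∑ i, C (D i) * (X * L i)) - M) + C E * (W - X * M) := by
        rw [hPdef]; ring
      rw [hre]
      have hcard : Fintype.card (Fin (n+1)) = n + 1 := by simp
      rw [hcard]
      calc (((∑ i, C (D i) * (X * L i)) - M) + C E * (W - X * M)).natDegree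
          ≤ max ((∑ i, C (D i) * (X * L i)) - M).natDegree
              (C E * (W - X * M)).natDegree := natDegree_add_le _ _
        _ ≤ n := by
            apply max_le
            · calc ((∑ i, C (D i) * (X * L i)) - M).natDegree
                  ≤ max (∑ i, C (D i) * (X * L i)).natDegree M.natDegree :=
                    natDegree_sub_le _ _
                _ ≤ n := max_le h1 (le_of_eq hMdeg)
            · calc (C E * (W - X * M)).natDegree ≤ (W - X * M).natDegree :=
                  natDegree_C_mul_le _ _
                _ ≤ n := h2'
        _ < n + 1 := Nat.lt_succ_self n
  have hPW : ∀ z : ℝ, P.eval z = -E * W.eval z := by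
    intro z
    have h := congrArg (Polynomial.eval z) hG
    simp only [eval_add, eval_mul, eval_C, eval_zero] at h
    linarith
  -- part (b): value of E
  have hb : E * ∏ m, w m = -∏ j, x j := by
    have h0 := hPW 0
    rw [hPeval' 0, hMeval 0, hWeval 0] at h0
    simp only [zero_mul, mul_zero, Finset.sum_const_zero, zero_sub, mul_zero,
      sub_zero, zero_sub] at h0
    have hxprod : ∏ j, (-(x j)) = (-1:ℝ)^n * ∏ j, x j := by
      have : ∀ j : Fin n, -(x j) = (-1 : ℝ) * x j := fun j => by ring
      rw [Finset.prod_congr rfl fun j _ => this j, Finset.prod_mul_distrib,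
        Finset.prod_const, Finset.card_univ, Fintype.card_fin]
    have hwprod : ∏ m, (-(w m)) = (-1:ℝ)^(n+1) * ∏ m, w m := by
      have : ∀ m : Fin (n+1), -(w m) = (-1 : ℝ) * w m := fun m => by ring
      rw [Finset.prod_congr rfl fun m _ => this m, Finset.prod_mul_distrib,
        Finset.prod_const, Finset.card_univ, Fintype.card_fin]
    rw [hxprod, hwprod] at h0
    have hne : ((-1:ℝ))^n ≠ 0 := by
      apply pow_ne_zero; norm_num
    apply mul_left_cancel₀ hne
    rw [pow_succ] at h0
    linear_combination -h0
  refine ⟨hb, ?_, ?_⟩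
  · -- part (a)
    intro k
    have hk := hPW (x k)
    rw [hPeval' (x k), hMeval (x k), hWeval (x k)] at hk
    have hM0 : ∏ j, (x k - x j) = 0 :=
      Finset.prod_eq_zero (Finset.mem_univ k) (by ring)
    have hsum : (∑ i, D i * (x k * (L i).eval (x k)))
        = D k * (x k * (L k).eval (x k)) := by
      apply Finset.sum_eq_single_of_mem k (Finset.mem_univ k)
      intro i _ hik
      have h0 : (L i).eval (x k) = 0 := by
        rw [hLeval]
        exact Finset.prod_eq_zero
          (Finset.mem_erase.mpr ⟨Ne.symm hik, Finset.mem_univ k⟩) (by ring)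
      rw [h0]; ring
    rw [hsum, hLeval, hM0] at hk
    simpa using hk
  · -- part (c)
    intro k hk0
    have hE0 : E = 0 := by
      have hxprod0 : ∏ j, x j = 0 := Finset.prod_eq_zero (Finset.mem_univ k) hk0
      have hwne : ∏ m, w m ≠ 0 := Finset.prod_ne_zero_iff.mpr fun m _ => hw0 m
      rw [hxprod0, neg_zero] at hb
      exact (mul_eq_zero.mp hb).resolve_right hwne
    have hPzero : P = 0 := by
      have hEW : C E * W = 0 := by rw [hE0]; simp
      rw [← hG, hEW, add_zero]
    have hMX : M = X * L k := by
      rw [hMfac k, hk0]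
      simp
    have hsumXP : (∑ i, C (D i) * (X * L i)) = X * ∑ i, C (D i) * L i := by
      rw [Finset.mul_sum]
      exact Finset.sum_congr rfl fun i _ => by ring
    have hPz : X * (∑ i, C (D i) * L i) = X * L k := by
      have h := hPzero
      rw [hPdef, hE0] at h
      simp only [map_zero, zero_mul, sub_zero] at h
      rw [sub_eq_zero] at h
      rw [← hsumXP, h, hMX]
    have hcanc : (∑ i, C (D i) * L i) = L k :=
      mul_left_cancel₀ X_ne_zero hPz
    have hev := congrArg (Polynomial.eval 0) hcanc
    simp only [eval_finset_sum, eval_mul, eval_C] at hev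
    have hsum0 : (∑ i, D i * (L i).eval 0) = D k * (L k).eval 0 := by
      apply Finset.sum_eq_single_of_mem k (Finset.mem_univ k)
      intro i _ hik
      have h0 : (L i).eval 0 = 0 := by
        rw [hLeval]
        exact Finset.prod_eq_zero
          (Finset.mem_erase.mpr ⟨Ne.symm hik, Finset.mem_univ k⟩) (by rw [hk0]; ring)
      rw [h0]; ring
    rw [hsum0] at hev
    have hLkne : (L k).eval 0 ≠ 0 := by
      rw [hLeval]
      apply Finset.prod_ne_zero_iff.mpr
      intro j hj
      have hjk : j ≠ k := (Finset.mem_erase.mp hj).1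
      intro hc
      apply hjk
      apply hx
      rw [hk0]
      linarith
    have hone : D k * (L k).eval 0 = 1 * (L k).eval 0 := by rw [one_mul]; exact hev
    exact mul_right_cancel₀ hLkne hone
end KeyLemma


open Finset

/-- Theorem 3.34: the unique solution of the Cauchy-type linear system (3.133) for the
derivatives `dp_i/dt` is given by the closed-form expression (3.129). -/
theorem singularity_line_parameter_ode (N : ℕ) (hN : 2 ≤ N)
    (ω : Fin N → ℝ) (hωpos : ∀ i, 0 < ω i)
    (hωsq : Function.Injective fun i => (ω i) ^ 2)
    (p : Fin (N - 1) → ℝ → ℝ) (t : ℝ)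
    (hdiff : ∀ i, DifferentiableAt ℝ (p i) t)
    (hpsq : Function.Injective fun i => (p i t) ^ 2)
    (hpω : ∀ i k, (p i t) ^ 2 ≠ (ω k) ^ 2)
    (hsys : ∀ k : Fin (N - 1),
      ∑ i : Fin (N - 1),
        (1 / (((ω ⟨0, by omega⟩) ^ 2 - (p i t) ^ 2) *
              ((ω ⟨k.1 + 1, by have := k.2; omega⟩) ^ 2 - (p i t) ^ 2))) *
          deriv (p i) t =
        1 / ((ω ⟨k.1 + 1, by have := k.2; omega⟩) ^ 2 * (ω ⟨0, by omega⟩) ^ 2)) :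
    ∀ k : Fin (N - 1),
      deriv (p k) t = (-1) ^ N *
        ((∏ i ∈ univ.erase k, (p i t) ^ 2) * ∏ i : Fin N, ((ω i) ^ 2 - (p k t) ^ 2)) /
        ((∏ i : Fin N, (ω i) ^ 2) *
          ∏ i ∈ univ.erase k, ((p k t) ^ 2 - (p i t) ^ 2)) := by
  obtain ⟨m, rfl⟩ : ∃ m, N = m + 1 := ⟨N - 1, by omega⟩
  have hm : 1 ≤ m := by omega
  -- reinterpret everything over `Fin m` / `Fin (m + 1)`
  have hx : Function.Injective (fun i : Fin m => (p i t) ^ 2) := hpsq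
  have hwinj : Function.Injective (fun j : Fin (m + 1) => (ω j) ^ 2) := hωsq
  have hw0 : ∀ j : Fin (m + 1), (ω j) ^ 2 ≠ 0 := fun j => by
    have := hωpos j
    positivity
  have hxw : ∀ (i : Fin m) (j : Fin (m + 1)), (p i t) ^ 2 ≠ (ω j) ^ 2 :=
    fun i j => hpω i j
  have hsys2 : ∀ k : Fin m,
      ∑ i : Fin m,
        (1 / (((ω 0) ^ 2 - (p i t) ^ 2) * ((ω k.succ) ^ 2 - (p i t) ^ 2))) *
          deriv (p i) t = 1 / ((ω k.succ) ^ 2 * (ω 0) ^ 2) := by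
    intro k
    have hk := hsys k
    have h00 : (⟨0, by omega⟩ : Fin (m + 1)) = 0 := by
      apply Fin.ext; simp
    have hks : (⟨(k : ℕ) + 1, by have := k.2; omega⟩ : Fin (m + 1)) = k.succ := by
      apply Fin.ext; simp
    rw [h00, hks] at hk
    exact hk
  set E : ℝ := (∑ i : Fin m, deriv (p i) t / ((ω 0) ^ 2 - (p i t) ^ 2)) - 1 / (ω 0) ^ 2
    with hE
  have hsys' : ∀ j : Fin (m + 1),
      ∑ i : Fin m, deriv (p i) t / ((ω j) ^ 2 - (p i t) ^ 2) = 1 / (ω j) ^ 2 + E := by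
    intro j
    refine Fin.cases ?_ ?_ j
    · rw [hE]; ring
    · intro k
      have hk := hsys2 k
      have hab : ∀ i : Fin m,
          deriv (p i) t / ((ω k.succ) ^ 2 - (p i t) ^ 2)
            - deriv (p i) t / ((ω 0) ^ 2 - (p i t) ^ 2)
          = ((ω 0) ^ 2 - (ω k.succ) ^ 2) *
            ((1 / (((ω 0) ^ 2 - (p i t) ^ 2) * ((ω k.succ) ^ 2 - (p i t) ^ 2))) *
              deriv (p i) t) := by
        intro i
        have h1 : (ω 0) ^ 2 - (p i t) ^ 2 ≠ 0 := sub_ne_zero.mpr (Ne.symm (hxw i 0))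
        have h2 : (ω k.succ) ^ 2 - (p i t) ^ 2 ≠ 0 :=
          sub_ne_zero.mpr (Ne.symm (hxw i k.succ))
        field_simp
        ring
      have hsum : ∑ i : Fin m, (deriv (p i) t / ((ω k.succ) ^ 2 - (p i t) ^ 2)
            - deriv (p i) t / ((ω 0) ^ 2 - (p i t) ^ 2))
          = ((ω 0) ^ 2 - (ω k.succ) ^ 2) * (1 / ((ω k.succ) ^ 2 * (ω 0) ^ 2)) := by
        rw [Finset.sum_congr rfl fun i _ => hab i, ← Finset.mul_sum, hk]
      rw [Finset.sum_sub_distrib] at hsum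
      have hwa : (ω 0) ^ 2 ≠ 0 := hw0 0
      have hwb : (ω k.succ) ^ 2 ≠ 0 := hw0 k.succ
      have hstep : ∑ i : Fin m, deriv (p i) t / ((ω k.succ) ^ 2 - (p i t) ^ 2)
          = ∑ i : Fin m, deriv (p i) t / ((ω 0) ^ 2 - (p i t) ^ 2)
            + ((ω 0) ^ 2 - (ω k.succ) ^ 2) * (1 / ((ω k.succ) ^ 2 * (ω 0) ^ 2)) := by
        linarith [hsum]
      rw [hstep, hE]
      linear_combination ((ω k.succ) ^ 2)⁻¹ * (mul_inv_cancel₀ hwa) - ((ω 0) ^ 2)⁻¹ * (mul_inv_cancel₀ hwb)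
  obtain ⟨hb, ha, hc⟩ := key_lemma m (fun i => (p i t) ^ 2) (fun i => deriv (p i) t)
    (fun j => (ω j) ^ 2) E hx hw0 hxw hwinj hsys'
  revert hb ha hc
  show (E * ∏ j : Fin (m + 1), (ω j) ^ 2 = -∏ j : Fin m, (p j t) ^ 2) →
      (∀ k : Fin m, deriv (p k) t *
          ((p k t) ^ 2 * ∏ j ∈ univ.erase k, ((p k t) ^ 2 - (p j t) ^ 2))
        = -E * ∏ j : Fin (m + 1), ((p k t) ^ 2 - (ω j) ^ 2)) →
      (∀ k : Fin m, (p k t) ^ 2 = 0 → deriv (p k) t = 1) → _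
  intro hb ha hc
  suffices h : ∀ k : Fin m,
      deriv (p k) t = (-1) ^ (m + 1) *
        ((∏ i ∈ univ.erase k, (p i t) ^ 2) * ∏ j : Fin (m + 1), ((ω j) ^ 2 - (p k t) ^ 2)) /
        ((∏ j : Fin (m + 1), (ω j) ^ 2) *
          ∏ i ∈ univ.erase k, ((p k t) ^ 2 - (p i t) ^ 2)) by
    exact h
  intro k
  have hPw : (∏ j : Fin (m + 1), (ω j) ^ 2) ≠ 0 :=
    Finset.prod_ne_zero_iff.mpr fun j _ => hw0 j
  by_cases hxk : (p k t) ^ 2 = 0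
  · -- degenerate case
    have hD1 : deriv (p k) t = 1 := hc k hxk
    have hA : ∀ i ∈ univ.erase k, (p i t) ^ 2 ≠ 0 := by
      intro i hi hzero
      exact (Finset.mem_erase.mp hi).1 (hx (hzero.trans hxk.symm))
    have hAne : (∏ i ∈ univ.erase k, (p i t) ^ 2) ≠ 0 := Finset.prod_ne_zero_iff.mpr hA
    have hwk : ∏ j : Fin (m + 1), ((ω j) ^ 2 - (p k t) ^ 2) = ∏ j : Fin (m + 1), (ω j) ^ 2 := by
      apply Finset.prod_congr rfl
      intro j _
      rw [hxk, sub_zero]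
    have hxe : ∏ i ∈ univ.erase k, ((p k t) ^ 2 - (p i t) ^ 2)
        = (-1 : ℝ) ^ (m - 1) * ∏ i ∈ univ.erase k, (p i t) ^ 2 := by
      have hstep : ∀ i ∈ univ.erase k, (p k t) ^ 2 - (p i t) ^ 2 = (-1 : ℝ) * (p i t) ^ 2 := by
        intro i _
        rw [hxk]; ring
      rw [Finset.prod_congr rfl hstep, Finset.prod_mul_distrib, Finset.prod_const,
        Finset.card_erase_of_mem (Finset.mem_univ k), Finset.card_univ, Fintype.card_fin]
    have hdne : (∏ j : Fin (m + 1), (ω j) ^ 2)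
        * ∏ i ∈ univ.erase k, ((p k t) ^ 2 - (p i t) ^ 2) ≠ 0 := by
      rw [hxe]
      apply mul_ne_zero hPw
      apply mul_ne_zero _ hAne
      apply pow_ne_zero; norm_num
    rw [hD1, eq_comm, div_eq_one_iff_eq hdne, hwk, hxe]
    have hpow : (-1 : ℝ) ^ (m + 1) = (-1 : ℝ) ^ (m - 1) := by
      have h : m - 1 + 2 = m + 1 := by omega
      rw [← h, pow_add]
      norm_num
    rw [hpow]
    ring
  · -- generic case
    have hak := ha k
    have hPd : (∏ i ∈ univ.erase k, ((p k t) ^ 2 - (p i t) ^ 2)) ≠ 0 := by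
      apply Finset.prod_ne_zero_iff.mpr
      intro i hi
      exact sub_ne_zero.mpr fun h => (Finset.mem_erase.mp hi).1 (hx h.symm)
    have hneg : ∏ j : Fin (m + 1), ((p k t) ^ 2 - (ω j) ^ 2)
        = (-1 : ℝ) ^ (m + 1) * ∏ j : Fin (m + 1), ((ω j) ^ 2 - (p k t) ^ 2) := by
      have hstep : ∀ j ∈ (univ : Finset (Fin (m + 1))),
          (p k t) ^ 2 - (ω j) ^ 2 = (-1 : ℝ) * ((ω j) ^ 2 - (p k t) ^ 2) := by
        intro j _; ring
      rw [Finset.prod_congr rfl hstep, Finset.prod_mul_distrib, Finset.prod_const,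
        Finset.card_univ, Fintype.card_fin]
    have hprodx : ∏ j : Fin m, (p j t) ^ 2 = (p k t) ^ 2 * ∏ i ∈ univ.erase k, (p i t) ^ 2 :=
      (Finset.mul_prod_erase univ _ (Finset.mem_univ k)).symm
    have h3 : deriv (p k) t *
          ((p k t) ^ 2 * ∏ i ∈ univ.erase k, ((p k t) ^ 2 - (p i t) ^ 2))
          * (∏ j : Fin (m + 1), (ω j) ^ 2)
        = (∏ j : Fin m, (p j t) ^ 2) * ∏ j : Fin (m + 1), ((p k t) ^ 2 - (ω j) ^ 2) := by
      linear_combination (∏ j : Fin (m + 1), (ω j) ^ 2) * hak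
        - (∏ j : Fin (m + 1), ((p k t) ^ 2 - (ω j) ^ 2)) * hb
    rw [hneg, hprodx] at h3
    rw [eq_div_iff (mul_ne_zero hPw hPd)]
    apply mul_left_cancel₀ hxk
    linear_combination h3
end

section
/- Let $0 < \omega_1 < \omega_2$ and suppose a curve $x(t)$ is defined implicitly (for $|p|<\omega_1$) by $\exp(2(\omega_k x + t/\omega_k)) = C_k(\omega_k + p(t))/(\omega_k - p(t))$, $k = 1,2$, with $C_1, C_2 > 0$. Then along the curve $\frac{dx}{dt} = \frac{\omega_1 \Theta(\omega_2)(\omega_2^2 - p^2) - \omega_2\Theta(\omega_1)(\omega_1^2 - p^2)}{\omega_1\omega_2(\omega_1^2 - \omega_2^2)}$ where $\Theta(\omega) = 1/\omega$; in particular, at the intersection point $p = 0$ one has $dx/dt = 0$, so the two singularity lines of the sinh-Gordon $N=2$ solution intersect at angle $\pi/2$ in the $(x,t)$ plane. -/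
lemma shg_step (ω C : ℝ) (hω : 0 < ω) (hC : 0 < C) (x p : ℝ → ℝ) (t : ℝ)
    (hx : DifferentiableAt ℝ x t) (hpd : DifferentiableAt ℝ p t)
    (hpb : |p t| < ω)
    (hline : ∀ s, Real.exp (2 * (ω * x s + s / ω)) = C * (ω + p s) / (ω - p s)) :
    (ω * deriv x t + 1 / ω) * (ω ^ 2 - p t ^ 2) = ω * deriv p t := by
  have hω0 : ω ≠ 0 := hω.ne'
  have hplt : p t < ω := (abs_lt.mp hpb).2
  have hpgt : -ω < p t := (abs_lt.mp hpb).1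
  have hne : ω - p t ≠ 0 := by intro h; linarith [sub_eq_zero.mp h]
  have hpos : 0 < ω + p t := by linarith
  have hF : HasDerivAt (fun s => Real.exp (2 * (ω * x s + s / ω)))
      (Real.exp (2 * (ω * x t + t / ω)) * (2 * (ω * deriv x t + 1 / ω))) t := by
    have h1 : HasDerivAt (fun s => 2 * (ω * x s + s / ω)) (2 * (ω * deriv x t + 1 / ω)) t := by
      have := ((hx.hasDerivAt.const_mul ω).add ((hasDerivAt_id t).div_const ω)).const_mul 2
      simpa using this
    simpa [mul_comm] using h1.exp
  have hG : HasDerivAt (fun s => C * (ω + p s) / (ω - p s))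
      ((C * deriv p t * (ω - p t) - C * (ω + p t) * (-deriv p t)) / (ω - p t) ^ 2) t := by
    have hnum : HasDerivAt (fun s => C * (ω + p s)) (C * deriv p t) t := by
      simpa using ((hasDerivAt_const t ω).add hpd.hasDerivAt).const_mul C
    have hden : HasDerivAt (fun s => ω - p s) (-deriv p t) t := by
      simpa using hpd.hasDerivAt.const_sub ω
    exact hnum.div hden hne
  have heq : (fun s => Real.exp (2 * (ω * x s + s / ω))) = fun s => C * (ω + p s) / (ω - p s) :=
    funext hline
  have huniq := (heq ▸ hF).unique hG
  rw [hline t] at huniq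
  have hC0 : C ≠ 0 := hC.ne'
  field_simp at huniq
  have hfac : (2*C*ω*(ω - p t)) ≠ 0 := by positivity
  apply mul_right_cancel₀ hfac
  field_simp
  linear_combination (1 / 2 : ℝ) * huniq


/-- Formula (3.117) for the sinh-Gordon case `Θ(ω) = 1/ω`: along the singularity line
`x(t)` determined by the parametrized system, the velocity is
`dx/dt = (ω₁Θ(ω₂)(ω₂²-p²) - ω₂Θ(ω₁)(ω₁²-p²)) / (ω₁ω₂(ω₁²-ω₂²))`; in particular at the
intersection point `p = 0` one has `dx/dt = 0` (lines intersect at angle π/2). -/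
theorem shg_singularity_line_velocity (ω₁ ω₂ : ℝ) (h1 : 0 < ω₁) (h12 : ω₁ < ω₂)
    (C₁ C₂ : ℝ) (hC₁ : 0 < C₁) (hC₂ : 0 < C₂)
    (x p : ℝ → ℝ) (t : ℝ)
    (hxdiff : DifferentiableAt ℝ x t) (hpdiff : DifferentiableAt ℝ p t)
    (hp : ∀ s, |p s| < ω₁)
    (hline₁ : ∀ s, Real.exp (2 * (ω₁ * x s + s / ω₁)) = C₁ * (ω₁ + p s) / (ω₁ - p s))
    (hline₂ : ∀ s, Real.exp (2 * (ω₂ * x s + s / ω₂)) = C₂ * (ω₂ + p s) / (ω₂ - p s)) :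
    deriv x t =
      (ω₁ * (1 / ω₂) * (ω₂ ^ 2 - (p t) ^ 2) - ω₂ * (1 / ω₁) * (ω₁ ^ 2 - (p t) ^ 2)) /
        (ω₁ * ω₂ * (ω₁ ^ 2 - ω₂ ^ 2)) ∧
    (p t = 0 → deriv x t = 0) := by
  have h2 : 0 < ω₂ := h1.trans h12
  have E1 := shg_step ω₁ C₁ h1 hC₁ x p t hxdiff hpdiff (hp t) hline₁
  have E2 := shg_step ω₂ C₂ h2 hC₂ x p t hxdiff hpdiff ((hp t).trans h12) hline₂
  have hd : ω₁ * ω₂ * (ω₁ ^ 2 - ω₂ ^ 2) ≠ 0 := by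
    have : ω₁ ^ 2 < ω₂ ^ 2 := by nlinarith
    have h' : ω₁ ^ 2 - ω₂ ^ 2 ≠ 0 := by intro h; nlinarith
    positivity
  have hmain : deriv x t =
      (ω₁ * (1 / ω₂) * (ω₂ ^ 2 - (p t) ^ 2) - ω₂ * (1 / ω₁) * (ω₁ ^ 2 - (p t) ^ 2)) /
        (ω₁ * ω₂ * (ω₁ ^ 2 - ω₂ ^ 2)) := by
    rw [eq_div_iff hd]
    field_simp at E1 E2 ⊢
    linear_combination ω₂ ^ 2 * E1 - ω₁ ^ 2 * E2
  refine ⟨hmain, fun hp0 => ?_⟩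
  rw [hmain, hp0]
  field_simp
  ring
end
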